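/- arXiv:2201.01454 — 3 statements merged into one kernel-verified Lean document; each statement's English description precedes it below -/
import Mathlib

section
/- Let E be a finite-dimensional real inner product space, K ⊆ E a nonempty closed convex set, and F : E → E continuous and pseudomonotone on K. Then the following three statements are equivalent: (a) there exists x̂ ∈ K such that the set {x ∈ K | ⟪F x, x − x̂⟫ < 0} is bounded (possibly empty); (b) there exist a bounded open set Ω ⊆ E and a point x̂ ∈ K ∩ Ω such that ⟪F x, x − x̂⟫ ≥ 0 for all x ∈ K ∩ ∂Ω (the boundary of Ω); (c) there exists x ∈ K with ⟪F x, y − x⟫ ≥ 0 for all y ∈ K, i.e. VI(K, F) has a solution. -/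
open RealInnerProductSpace
open Set Metric Filter Topology

/-!
On a compact convex set `D`, the Minty conditions `⟪F y, y - x⟫ ≥ 0` (`y ∈ D`) cut out closed
half-spaces which, by pseudomonotonicity, have the KKM property: the convex hull of finitely many
`y`s is covered by their half-spaces. The KKM lemma for closed convex sets, which follows from
Berge's intersection theorem (induction on the number of sets, separating by a hyperplane), gives a
common point `x`; continuity of `F` along segments then makes `x` a solution of `VI(D, F)`.

For (b) ⇒ (c), take `D = K ∩ closedBall 0 R` with `closure Ω ⊆ ball 0 R`. A solution `x` of
`VI(D, F)` solves `VI(K, F)` as soon as `⟪F x, x₀ - x⟫ ≤ 0` for some `x₀ ∈ K` inside the ball,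
because `D` contains a piece of every segment of `K` issuing from `x₀`. If `x ∈ closure Ω` take
`x₀ = x`; otherwise the segment from `x₀ ∈ Ω` to `x` meets `frontier Ω` at some `z`, and the
boundary inequality at `z` passes to `x` by pseudomonotonicity. (a) ⇒ (b) uses a large ball as
`Ω`, and at a solution the set in (a) is empty.
-/

theorem IsPreconnected.inter_frontier_nonempty {X : Type*} [TopologicalSpace X] {s t : Set X}
    (hs : IsPreconnected s) (hst : (s ∩ t).Nonempty) (hst' : (s \ t).Nonempty) :
    (s ∩ frontier t).Nonempty :=
  isPreconnected_closed_iff.1 hs (closure t) (interior t)ᶜ isClosed_closure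
    isOpen_interior.isClosed_compl
    (fun x _ => (em (x ∈ interior t)).imp (fun h => interior_subset_closure h) id)
    (hst.mono (inter_subset_inter_right _ subset_closure))
    (hst'.mono (inter_subset_inter_right _ (compl_subset_compl.2 interior_subset)))

section Berge

variable {ι E : Type*} [AddCommGroup E] [Module ℝ E] [TopologicalSpace E]
  [IsTopologicalAddGroup E] [ContinuousSMul ℝ E] [T2Space E] [LocallyConvexSpace ℝ E]

theorem nonempty_biInter_of_convex_biUnion [DecidableEq ι] {s : Finset ι} {C : ι → Set E}
    (hconv : ∀ i ∈ s, Convex ℝ (C i)) (hcomp : ∀ i ∈ s, IsCompact (C i))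
    (hne : (⋃ i ∈ s, C i).Nonempty) (hsub : ∀ i ∈ s, (⋂ j ∈ s.erase i, C j).Nonempty)
    (hU : Convex ℝ (⋃ i ∈ s, C i)) : (⋂ i ∈ s, C i).Nonempty := by
  have hs : s.Nonempty := by
    obtain ⟨x, hx⟩ := hne
    obtain ⟨i, hi, -⟩ := mem_iUnion₂.1 hx
    exact ⟨i, hi⟩
  induction hs using Finset.Nonempty.cons_induction generalizing C with
  | singleton a => simpa using hne
  | cons a s ha hs ih =>
    by_contra hemp
    set B := ⋂ j ∈ s, C j
    have hBne : B.Nonempty := by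
      simpa only [Finset.erase_cons] using hsub a (Finset.mem_cons_self a s)
    obtain ⟨b, hb⟩ := hs
    have hBcomp : IsCompact B :=
      (hcomp b (Finset.mem_cons_of_mem hb)).of_isClosed_subset
        (isClosed_biInter fun j hj => (hcomp j (Finset.mem_cons_of_mem hj)).isClosed)
        (biInter_subset_of_mem hb)
    have hdisj : Disjoint B (C a) := by
      refine Set.disjoint_left.2 fun x hxB hxa => hemp ⟨x, ?_⟩
      simp only [Finset.cons_eq_insert, Finset.set_biInter_insert]
      exact ⟨hxa, hxB⟩
    obtain ⟨f, u, v, hfB, huv, hfa⟩ :=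
      geometric_hahn_banach_compact_closed
        (convex_iInter₂ fun j hj => hconv j (Finset.mem_cons_of_mem hj)) hBcomp
        (hconv a (Finset.mem_cons_self a s)) (hcomp a (Finset.mem_cons_self a s)).isClosed hdisj
    set H : Set E := f ⁻¹' {u}
    have hcross : ∀ G : Set E, Convex ℝ G → (G ∩ B).Nonempty → (G ∩ C a).Nonempty →
        (G ∩ H).Nonempty := by
      rintro G hG ⟨q, hqG, hqB⟩ ⟨p, hpG, hpa⟩
      exact hG.isPreconnected.intermediate_value hqG hpG f.continuous.continuousOn
        ⟨(hfB q hqB).le, huv.le.trans (hfa p hpa).le⟩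
    have hsubA : ∀ i ∈ s, ((⋂ j ∈ s.erase i, C j) ∩ C a).Nonempty := by
      intro i hi
      obtain ⟨p, hp⟩ := hsub i (Finset.mem_cons_of_mem hi)
      rw [Finset.erase_cons_of_ne ha (ne_of_mem_of_not_mem hi ha).symm, Finset.cons_eq_insert,
        Finset.set_biInter_insert] at hp
      exact ⟨p, hp.2, hp.1⟩
    have hBG : ∀ i, B ⊆ ⋂ j ∈ s.erase i, C j := fun i x hx =>
      mem_iInter₂.2 fun j hj => mem_iInter₂.1 hx j (Finset.mem_of_mem_erase hj)
    have hCaH : C a ∩ H = ∅ :=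
      eq_empty_of_forall_notMem fun x ⟨hxa, hxH⟩ => (huv.trans (hfa x hxa)).ne' hxH
    have hUH : ⋃ i ∈ s, (C i ∩ H) = (⋃ i ∈ Finset.cons a s ha, C i) ∩ H := by
      rw [Finset.cons_eq_insert, Finset.set_biUnion_insert, union_inter_distrib_right, hCaH,
        empty_union, iUnion₂_inter]
    have hHconv : Convex ℝ H := (convex_singleton u).linear_preimage f.toLinearMap
    obtain ⟨x, hx⟩ := ih (C := fun i => C i ∩ H)
      (fun i hi => (hconv i (Finset.mem_cons_of_mem hi)).inter hHconv)
      (fun i hi => (hcomp i (Finset.mem_cons_of_mem hi)).inter_right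
        (isClosed_singleton.preimage f.continuous))
      (hUH ▸ hcross _ hU (hBne.mono fun x hx =>
          ⟨mem_biUnion (Finset.mem_cons_of_mem hb) (mem_iInter₂.1 hx b hb), hx⟩)
        ((hsubA b hb).mono fun x hx => ⟨mem_biUnion (Finset.mem_cons_self a s) hx.2, hx.2⟩))
      (fun i hi => by
        obtain ⟨z, hzG, hzH⟩ := hcross _ (convex_iInter₂ fun j hj =>
            hconv j (Finset.mem_cons_of_mem (Finset.mem_of_mem_erase hj)))
          (hBne.mono fun x hx => ⟨hBG i hx, hx⟩) (hsubA i hi)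
        exact ⟨z, mem_iInter₂.2 fun j hj => ⟨mem_iInter₂.1 hzG j hj, hzH⟩⟩)
      (hUH ▸ hU.inter hHconv)
    have hxB : x ∈ B := mem_iInter₂.2 fun j hj => (mem_iInter₂.1 hx j hj).1
    exact (hfB x hxB).ne (mem_iInter₂.1 hx b hb).2

theorem nonempty_biInter_of_convexHull_subset_biUnion [DecidableEq ι] (s : Finset ι) (p : ι → E)
    {C : ι → Set E} (hconv : ∀ i ∈ s, Convex ℝ (C i)) (hclosed : ∀ i ∈ s, IsClosed (C i))
    (hkkm : ∀ t ⊆ s, convexHull ℝ (p '' t) ⊆ ⋃ i ∈ t, C i) : (⋂ i ∈ s, C i).Nonempty := by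
  induction s using Finset.strongInduction generalizing C with
  | H s ih =>
  rcases s.eq_empty_or_nonempty with rfl | hs
  · simp
  set hull := convexHull ℝ (p '' s)
  have hhull : IsCompact hull := (s.finite_toSet.image p).isCompact_convexHull ℝ
  have hUnion : ⋃ i ∈ s, (C i ∩ hull) = hull := by
    rw [← iUnion₂_inter]
    exact inter_eq_right.2 (hkkm s subset_rfl)
  refine (nonempty_biInter_of_convex_biUnion (C := fun i => C i ∩ hull)
    (fun i hi => (hconv i hi).inter (convex_convexHull ℝ _))
    (fun i hi => hhull.inter_left (hclosed i hi))
    (by rw [hUnion]; exact convexHull_nonempty_iff.2 ((Finset.coe_nonempty.2 hs).image p))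
    (fun i hi => ih _ (Finset.erase_ssubset hi)
      (fun j hj => (hconv j (Finset.mem_of_mem_erase hj)).inter (convex_convexHull ℝ _))
      (fun j hj => (hclosed j (Finset.mem_of_mem_erase hj)).inter hhull.isClosed)
      fun t ht => ?_)
    (by rw [hUnion]; exact convex_convexHull ℝ _)).mono (iInter₂_mono fun _ _ => inter_subset_left)
  have hts : t ⊆ s := ht.trans (Finset.erase_subset i s)
  rw [← iUnion₂_inter]
  exact subset_inter (hkkm t hts) (convexHull_mono (image_mono (Finset.coe_subset.2 hts)))

end Berge

section VariationalInequality

variable {E : Type*} [NormedAddCommGroup E] [InnerProductSpace ℝ E]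

def PseudomonotoneOn (F : E → E) (K : Set E) : Prop :=
  ∀ x ∈ K, ∀ y ∈ K, 0 ≤ ⟪F x, y - x⟫ → 0 ≤ ⟪F y, y - x⟫

variable {F : E → E} {K D : Set E}

theorem PseudomonotoneOn.mono (hF : PseudomonotoneOn F K) (hDK : D ⊆ K) : PseudomonotoneOn F D :=
  fun x hx y hy => hF x (hDK hx) y (hDK hy)

theorem PseudomonotoneOn.exists_inner_nonneg_of_mem_convexHull (hF : PseudomonotoneOn F D)
    (hD : Convex ℝ D) {T : Set E} (hT : T ⊆ D) {x : E} (hx : x ∈ convexHull ℝ T) :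
    ∃ y ∈ T, 0 ≤ ⟪F y, y - x⟫ := by
  by_contra! hneg
  have hxD : x ∈ D := hD.convexHull_subset_iff.2 hT hx
  have hT' : T ⊆ {z | ⟪F x, z⟫ < ⟪F x, x⟫} := fun y hy => by
    have := lt_of_not_ge (mt (hF x hxD y (hT hy)) (hneg y hy).not_ge)
    rwa [inner_sub_right, sub_neg] at this
  have hconv : Convex ℝ {z | ⟪F x, z⟫ < ⟪F x, x⟫} :=
    convex_halfSpace_lt (innerₗ E (F x)).isLinear _
  exact lt_irrefl ⟪F x, x⟫ (convexHull_min hT' hconv hx)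

theorem PseudomonotoneOn.exists_minty_solution (hF : PseudomonotoneOn F D) (hD : IsCompact D)
    (hDc : Convex ℝ D) (hne : D.Nonempty) : ∃ x ∈ D, ∀ y ∈ D, 0 ≤ ⟪F y, y - x⟫ := by
  classical
  let H : D → Set E := fun y => {x | ⟪F y, x⟫ ≤ ⟪F y, y⟫}
  have hH : ∀ y x, x ∈ H y ↔ 0 ≤ ⟪F y, y - x⟫ := fun y x => by
    rw [inner_sub_right, sub_nonneg]; rfl
  have hHconv : ∀ y, Convex ℝ (H y) := fun y =>
    convex_halfSpace_le (innerₗ E (F y)).isLinear _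
  have hHclosed : ∀ y, IsClosed (H y) := fun y =>
    isClosed_le (continuous_const.inner continuous_id) continuous_const
  suffices hfin : ∀ u : Finset D, (D ∩ ⋂ i ∈ u, H i).Nonempty by
    obtain ⟨x, hxD, hx⟩ := hD.inter_iInter_nonempty H hHclosed hfin
    exact ⟨x, hxD, fun y hy => (hH ⟨y, hy⟩ x).1 (mem_iInter.1 hx ⟨y, hy⟩)⟩
  intro u
  rcases u.eq_empty_or_nonempty with rfl | ⟨i, hi⟩
  · simpa using hne
  obtain ⟨x, hx⟩ := nonempty_biInter_of_convexHull_subset_biUnion u Subtype.val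
    (C := fun y => D ∩ H y) (fun y _ => hDc.inter (hHconv y))
    (fun y _ => hD.isClosed.inter (hHclosed y)) fun t _ x hx => by
      have hxD : x ∈ D := hDc.convexHull_subset_iff.2 (image_subset_iff.2 fun y _ => y.2) hx
      obtain ⟨_, ⟨y, hy, rfl⟩, hxy⟩ := hF.exists_inner_nonneg_of_mem_convexHull hDc
        (image_subset_iff.2 fun y _ => y.2) hx
      exact mem_biUnion hy ⟨hxD, (hH y x).2 hxy⟩
  exact ⟨x, (mem_iInter₂.1 hx i hi).1, iInter₂_mono (fun _ _ => inter_subset_right) hx⟩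

theorem inner_nonneg_of_minty (hD : Convex ℝ D) (hF : ContinuousOn F D) {x : E} (hx : x ∈ D)
    (hminty : ∀ y ∈ D, 0 ≤ ⟪F y, y - x⟫) : ∀ y ∈ D, 0 ≤ ⟪F x, y - x⟫ := by
  intro y hy
  have hseg : MapsTo (fun τ : ℝ => x + τ • (y - x)) (Ioc 0 1) D := fun τ hτ =>
    hD.add_smul_sub_mem hx hy (Ioc_subset_Icc_self hτ)
  have hcont : ContinuousWithinAt (fun τ : ℝ => ⟪F (x + τ • (y - x)), y - x⟫) (Ioc 0 1) 0 :=
    ((hF x hx).comp_of_eq (by fun_prop : Continuous fun τ : ℝ => x + τ • (y - x)).continuousWithinAt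
      hseg (by simp)).inner continuousWithinAt_const
  have hpos : ∀ τ ∈ Ioc (0 : ℝ) 1, 0 ≤ ⟪F (x + τ • (y - x)), y - x⟫ := fun τ hτ => by
    have h := hminty _ (hseg hτ)
    rw [add_sub_cancel_left, real_inner_smul_right] at h
    exact nonneg_of_mul_nonneg_right h hτ.1
  simpa using ContinuousWithinAt.closure_le (f := fun _ => (0 : ℝ))
    (by rw [closure_Ioc zero_ne_one]; exact left_mem_Icc.2 zero_le_one)
    continuousWithinAt_const hcont hpos

theorem PseudomonotoneOn.exists_solution_of_isCompact (hF : PseudomonotoneOn F D)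
    (hD : IsCompact D) (hDc : Convex ℝ D) (hne : D.Nonempty) (hcont : ContinuousOn F D) :
    ∃ x ∈ D, ∀ y ∈ D, 0 ≤ ⟪F x, y - x⟫ :=
  let ⟨x, hx, hminty⟩ := hF.exists_minty_solution hD hDc hne
  ⟨x, hx, inner_nonneg_of_minty hDc hcont hx hminty⟩

theorem forall_inner_nonneg_of_inter_nhds (hK : Convex ℝ K) {N : Set E} {x x₀ : E}
    (hN : N ∈ 𝓝 x₀) (hx₀ : x₀ ∈ K) (hsol : ∀ y ∈ K ∩ N, 0 ≤ ⟪F x, y - x⟫)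
    (hpiv : ⟪F x, x₀ - x⟫ ≤ 0) : ∀ y ∈ K, 0 ≤ ⟪F x, y - x⟫ := by
  intro y hy
  have hlim : Tendsto (fun τ : ℝ => x₀ + τ • (y - x₀)) (𝓝[>] 0) (𝓝 x₀) := by
    have : Continuous fun τ : ℝ => x₀ + τ • (y - x₀) := by fun_prop
    simpa using (this.tendsto 0).mono_left nhdsWithin_le_nhds
  obtain ⟨τ, hτN, hτ⟩ := ((hlim.eventually hN).and (Ioo_mem_nhdsGT zero_lt_one)).exists
  have h := hsol _ ⟨hK.add_smul_sub_mem hx₀ hy (Ioo_subset_Icc_self hτ), hτN⟩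
  rw [show x₀ + τ • (y - x₀) - x = (x₀ - x) + τ • (y - x₀) by abel, inner_add_right,
    real_inner_smul_right] at h
  have hy₀ : 0 ≤ ⟪F x, y - x₀⟫ := nonneg_of_mul_nonneg_right (by linarith) hτ.1
  have hx₀' := hsol x₀ ⟨hx₀, mem_of_mem_nhds hN⟩
  calc 0 ≤ ⟪F x, y - x₀⟫ + ⟪F x, x₀ - x⟫ := by linarith
    _ = ⟪F x, y - x⟫ := by rw [← inner_add_right, sub_add_sub_cancel]

theorem PseudomonotoneOn.inner_sub_nonneg_of_mem_openSegment (hF : PseudomonotoneOn F K)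
    {x₀ x z : E} (hx : x ∈ K) (hz : z ∈ K) (hzx : z ∈ openSegment ℝ x₀ x)
    (h : 0 ≤ ⟪F z, z - x₀⟫) : 0 ≤ ⟪F x, x - x₀⟫ := by
  obtain ⟨a, b, ha, hb, hab, rfl⟩ := hzx
  obtain rfl : a = 1 - b := by linarith
  have hz₀ : (1 - b) • x₀ + b • x - x₀ = b • (x - x₀) := by module
  have hzx : x - ((1 - b) • x₀ + b • x) = (1 - b) • (x - x₀) := by module
  rw [hz₀, real_inner_smul_right] at h
  have h' := hF _ hz x hx (by
    rw [hzx, real_inner_smul_right]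
    exact mul_nonneg ha.le (nonneg_of_mul_nonneg_right h hb))
  rw [hzx, real_inner_smul_right] at h'
  exact nonneg_of_mul_nonneg_right h' ha

theorem PseudomonotoneOn.exists_solution_of_frontier [FiniteDimensional ℝ E]
    (hpseudo : PseudomonotoneOn F K) (hKc : IsClosed K) (hKconv : Convex ℝ K) (hF : Continuous F)
    {Ω : Set E} (hΩo : IsOpen Ω) (hΩb : Bornology.IsBounded Ω) {x₀ : E} (hx₀ : x₀ ∈ K ∩ Ω)
    (hbdry : ∀ x ∈ K ∩ frontier Ω, 0 ≤ ⟪F x, x - x₀⟫) :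
    ∃ x ∈ K, ∀ y ∈ K, 0 ≤ ⟪F x, y - x⟫ := by
  obtain ⟨R, hR⟩ := hΩb.closure.subset_ball (0 : E)
  have hx₀R : x₀ ∈ ball (0 : E) R := hR (subset_closure hx₀.2)
  obtain ⟨x, ⟨hxK, -⟩, hx⟩ := (hpseudo.mono inter_subset_left).exists_solution_of_isCompact
    ((isCompact_closedBall 0 R).inter_left hKc) (hKconv.inter (convex_closedBall 0 R))
    ⟨x₀, hx₀.1, ball_subset_closedBall hx₀R⟩ hF.continuousOn
  refine ⟨x, hxK, ?_⟩
  by_cases hxΩ : x ∈ closure Ω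
  · exact forall_inner_nonneg_of_inter_nhds hKconv (closedBall_mem_nhds_of_mem (hR hxΩ)) hxK hx
      (by simp)
  obtain ⟨z, hzs, hzf⟩ := (convex_segment x₀ x).isPreconnected.inter_frontier_nonempty
    ⟨x₀, left_mem_segment ℝ x₀ x, hx₀.2⟩
    ⟨x, right_mem_segment ℝ x₀ x, fun h => hxΩ (subset_closure h)⟩
  have hzx₀ : x₀ ≠ z := fun h => (hΩo.inter_frontier_eq.subset ⟨hx₀.2, h ▸ hzf⟩ : x₀ ∈ ∅)
  have hzx : x ≠ z := fun h => hxΩ (h ▸ frontier_subset_closure hzf)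
  have hzK : z ∈ K := hKconv.segment_subset hx₀.1 hxK hzs
  have hxx₀ := hpseudo.inner_sub_nonneg_of_mem_openSegment hxK hzK
    (mem_openSegment_of_ne_left_right hzx₀ hzx hzs) (hbdry z ⟨hzK, hzf⟩)
  refine forall_inner_nonneg_of_inter_nhds hKconv (closedBall_mem_nhds_of_mem hx₀R) hx₀.1 hx ?_
  rw [← neg_sub, inner_neg_right]
  linarith

theorem exists_isOpen_isBounded_inner_nonneg_on_frontier {x₀ : E} (hx₀ : x₀ ∈ K)
    (hbd : Bornology.IsBounded {x ∈ K | ⟪F x, x - x₀⟫ < 0}) :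
    ∃ Ω : Set E, IsOpen Ω ∧ Bornology.IsBounded Ω ∧
      ∃ x₀' ∈ K ∩ Ω, ∀ x ∈ K ∩ frontier Ω, 0 ≤ ⟪F x, x - x₀'⟫ := by
  obtain ⟨r, hr⟩ := (Bornology.isBounded_insert.2 hbd).subset_ball x₀
  refine ⟨ball x₀ r, isOpen_ball, isBounded_ball, x₀, ⟨hx₀, hr (mem_insert _ _)⟩,
    fun x ⟨hxK, hxf⟩ => ?_⟩
  by_contra! hneg
  exact (isOpen_ball.inter_frontier_eq.subset ⟨hr (mem_insert_of_mem _ ⟨hxK, hneg⟩), hxf⟩ :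
    x ∈ (∅ : Set E))

end VariationalInequality

theorem stmt_6_general {E : Type*} [NormedAddCommGroup E] [InnerProductSpace ℝ E]
    [FiniteDimensional ℝ E]
    (K : Set E) (hKc : IsClosed K) (hKconv : Convex ℝ K)
    (F : E → E) (hF : Continuous F)
    (hpseudo : ∀ x ∈ K, ∀ y ∈ K, 0 ≤ ⟪F x, y - x⟫ → 0 ≤ ⟪F y, y - x⟫) :
    ((∃ x₀ ∈ K, Bornology.IsBounded {x ∈ K | ⟪F x, x - x₀⟫ < 0}) ↔
      (∃ Ω : Set E, IsOpen Ω ∧ Bornology.IsBounded Ω ∧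
        ∃ x₀ ∈ K ∩ Ω, ∀ x ∈ K ∩ frontier Ω, 0 ≤ ⟪F x, x - x₀⟫)) ∧
    ((∃ Ω : Set E, IsOpen Ω ∧ Bornology.IsBounded Ω ∧
        ∃ x₀ ∈ K ∩ Ω, ∀ x ∈ K ∩ frontier Ω, 0 ≤ ⟪F x, x - x₀⟫) ↔
      (∃ x ∈ K, ∀ y ∈ K, 0 ≤ ⟪F x, y - x⟫)) := by
  have hab : (∃ x₀ ∈ K, Bornology.IsBounded {x ∈ K | ⟪F x, x - x₀⟫ < 0}) →
      ∃ Ω : Set E, IsOpen Ω ∧ Bornology.IsBounded Ω ∧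
        ∃ x₀ ∈ K ∩ Ω, ∀ x ∈ K ∩ frontier Ω, 0 ≤ ⟪F x, x - x₀⟫ := fun ⟨x₀, hx₀, hbd⟩ =>
    exists_isOpen_isBounded_inner_nonneg_on_frontier hx₀ hbd
  have hbc : (∃ Ω : Set E, IsOpen Ω ∧ Bornology.IsBounded Ω ∧
        ∃ x₀ ∈ K ∩ Ω, ∀ x ∈ K ∩ frontier Ω, 0 ≤ ⟪F x, x - x₀⟫) →
      ∃ x ∈ K, ∀ y ∈ K, 0 ≤ ⟪F x, y - x⟫ := fun ⟨_, hΩo, hΩb, _, hx₀, hbdry⟩ =>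
    PseudomonotoneOn.exists_solution_of_frontier hpseudo hKc hKconv hF hΩo hΩb hx₀ hbdry
  have hca : (∃ x ∈ K, ∀ y ∈ K, 0 ≤ ⟪F x, y - x⟫) →
      ∃ x₀ ∈ K, Bornology.IsBounded {x ∈ K | ⟪F x, x - x₀⟫ < 0} := fun ⟨x, hxK, hx⟩ =>
    ⟨x, hxK, Bornology.isBounded_empty.subset fun y ⟨hyK, hy⟩ =>
      hy.not_ge (hpseudo x hxK y hyK (hx y hyK))⟩
  exact ⟨⟨hab, hca ∘ hbc⟩, ⟨hbc, hab ∘ hca⟩⟩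

theorem stmt_6 {E : Type*} [NormedAddCommGroup E] [InnerProductSpace ℝ E]
    [FiniteDimensional ℝ E]
    (K : Set E) (hK : K.Nonempty) (hKc : IsClosed K) (hKconv : Convex ℝ K)
    (F : E → E) (hF : Continuous F)
    (hpseudo : ∀ x ∈ K, ∀ y ∈ K, 0 ≤ ⟪F x, y - x⟫ → 0 ≤ ⟪F y, y - x⟫) :
    ((∃ x₀ ∈ K, Bornology.IsBounded {x ∈ K | ⟪F x, x - x₀⟫ < 0}) ↔
      (∃ Ω : Set E, IsOpen Ω ∧ Bornology.IsBounded Ω ∧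
        ∃ x₀ ∈ K ∩ Ω, ∀ x ∈ K ∩ frontier Ω, 0 ≤ ⟪F x, x - x₀⟫)) ∧
    ((∃ Ω : Set E, IsOpen Ω ∧ Bornology.IsBounded Ω ∧
        ∃ x₀ ∈ K ∩ Ω, ∀ x ∈ K ∩ frontier Ω, 0 ≤ ⟪F x, x - x₀⟫) ↔
      (∃ x ∈ K, ∀ y ∈ K, 0 ≤ ⟪F x, y - x⟫)) :=
  stmt_6_general K hKc hKconv F hF hpseudo
end

section
/- Let C₀ ⊆ ℝᵐ be an open convex set and F : ℝᵐ → ℝᵐ continuously differentiable and pseudomonotone on C₀ with symmetric Jacobian DF(x) for every x ∈ C₀. Let P ∈ ℝ^{m×m} be an orthogonal projection matrix (Pᵀ = P and P² = P). Assume that for every x ∈ C₀ there is an orthogonal matrix Q and vectors a, q ∈ ℝᵐ with Qᵀ DF(x) Q = diag(a) and Qᵀ P Q = diag(q) (so DF(x) and P commute) such that q_i > 0 whenever a_i < 0. Let s ≥ 0 be such that s ≥ −λ_min(DF(x)) for every x ∈ C₀, where λ_min denotes the smallest eigenvalue. Then the map x ↦ F(x) + s · P x is monotone on C₀: ⟪(F(x)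 + s·Px) − (F(y) + s·Py), x − y⟫ ≥ 0 for all x, y ∈ C₀; equivalently, DF(x) + s·P is positive semidefinite for every x ∈ C₀. -/
/-!
Conjugating by the common orthogonal eigenbasis `Q` turns `DF(x) + s P` into the diagonal matrix
`diag(a + s q)`. Since `P` is idempotent, each `q i` is `0` or `1`, and `q i = 0` forces
`a i ≥ 0`, while each `a i` is an eigenvalue of `DF(x)`, so `a i + s ≥ 0`: the diagonal is
nonnegative and `DF(x) + s P` is positive semidefinite. Monotonicity of `x ↦ F x + s P x` on the
convex set then follows from the mean value theorem along the segment from `y` to `x`.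
-/

open Matrix

theorem Convex.dotProduct_sub_nonneg_of_hasFDerivAt {ι : Type*} [Fintype ι]
    {C : Set (ι → ℝ)} (hC : Convex ℝ C) {G : (ι → ℝ) → ι → ℝ}
    {G' : (ι → ℝ) → (ι → ℝ) →L[ℝ] ι → ℝ} (hG : ∀ x ∈ C, HasFDerivAt G (G' x) x)
    (hG' : ∀ x ∈ C, ∀ u, 0 ≤ G' x u ⬝ᵥ u) {x y : ι → ℝ} (hx : x ∈ C) (hy : y ∈ C) :
    0 ≤ (G x - G y) ⬝ᵥ (x - y) := by
  let L : (ι → ℝ) →L[ℝ] ℝ := LinearMap.toContinuousLinearMap ((dotProductBilin ℝ ℝ).flip (x - y))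
  obtain ⟨z, hz, hmvt⟩ := domain_mvt (f := L ∘ G)
    (fun z hz => (L.hasFDerivAt.comp z (hG z hz)).hasFDerivWithinAt) hC hy hx
  have : (G x - G y) ⬝ᵥ (x - y) = G' z (x - y) ⬝ᵥ (x - y) := by
    simpa only [L, Function.comp_apply, ContinuousLinearMap.comp_apply,
      LinearMap.coe_toContinuousLinearMap', LinearMap.flip_apply, dotProductBilin_apply_apply,
      sub_dotProduct] using hmvt
  exact this ▸ hG' z (hC.segment_subset hy hx hz) _

namespace Matrix

variable {n : Type*} [Fintype n] [DecidableEq n]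

section CommRing

variable {R : Type*} [CommRing R] {Q : Matrix n n R}

theorem eq_mul_mul_transpose_of_transpose_mul_mul_eq {A D : Matrix n n R} (hQ : Qᵀ * Q = 1)
    (h : Qᵀ * A * Q = D) : A = Q * D * Qᵀ := by
  have hQ' : Q * Qᵀ = 1 := mul_eq_one_comm.mp hQ
  rw [← h, ← Matrix.mul_assoc, ← Matrix.mul_assoc, hQ', Matrix.one_mul, Matrix.mul_assoc, hQ',
    Matrix.mul_one]

theorem spectrum_transpose_mul_mul (hQ : Qᵀ * Q = 1) (A : Matrix n n R) :
    spectrum R (Qᵀ * A * Q) = spectrum R A :=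
  spectrum.units_conjugate' (u := ⟨Q, Qᵀ, mul_eq_one_comm.mp hQ, hQ⟩)

theorem isIdempotentElem_transpose_mul_mul {P : Matrix n n R} (hP : IsIdempotentElem P)
    (hQ : Qᵀ * Q = 1) : IsIdempotentElem (Qᵀ * P * Q) := by
  have hQ' : Q * Qᵀ = 1 := mul_eq_one_comm.mp hQ
  calc Qᵀ * P * Q * (Qᵀ * P * Q) = Qᵀ * (P * (Q * Qᵀ) * P) * Q := by
        simp only [Matrix.mul_assoc]
    _ = Qᵀ * P * Q := by rw [hQ', Matrix.mul_one, hP.eq, Matrix.mul_assoc]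

theorem isIdempotentElem_diagonal_iff {d : n → R} :
    IsIdempotentElem (diagonal d) ↔ ∀ i, IsIdempotentElem (d i) := by
  simp only [IsIdempotentElem, diagonal_mul_diagonal, diagonal_eq_diagonal_iff]

end CommRing

theorem IsHermitian.mem_range_eigenvalues_of_transpose_mul_mul_eq_diagonal
    {A Q : Matrix n n ℝ} (hA : A.IsHermitian) (hQ : Qᵀ * Q = 1) {a : n → ℝ}
    (h : Qᵀ * A * Q = diagonal a) (i : n) : a i ∈ Set.range hA.eigenvalues := by
  rw [← hA.spectrum_real_eq_range_eigenvalues, ← spectrum_transpose_mul_mul hQ, h,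
    spectrum_diagonal]
  exact Set.mem_range_self i

theorem posSemidef_add_smul_of_transpose_mul_mul_eq_diagonal {A P Q : Matrix n n ℝ}
    {a q : n → ℝ} {s : ℝ} (hQ : Qᵀ * Q = 1) (hA : Qᵀ * A * Q = diagonal a)
    (hP : Qᵀ * P * Q = diagonal q) (hPidem : IsIdempotentElem P)
    (hneg : ∀ i, a i < 0 → 0 < q i) (hs : ∀ i, -a i ≤ s) :
    (A + s • P).PosSemidef := by
  have hq : ∀ i, q i = 0 ∨ q i = 1 := fun i =>
    IsIdempotentElem.iff_eq_zero_or_one.mp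
      (isIdempotentElem_diagonal_iff.mp (hP ▸ isIdempotentElem_transpose_mul_mul hPidem hQ) i)
  have hdiag : (diagonal (a + s • q)).PosSemidef := by
    refine posSemidef_diagonal_iff.mpr fun i => ?_
    simp only [Pi.add_apply, Pi.smul_apply, smul_eq_mul]
    rcases hq i with hqi | hqi
    · have hai : ¬ a i < 0 := fun h => (hneg i h).ne' hqi
      rw [hqi]; linarith
    · rw [hqi]; linarith [hs i]
  have hconj : Qᵀ * (A + s • P) * Q = diagonal (a + s • q) := by
    rw [Matrix.mul_add, Matrix.add_mul, Matrix.mul_smul, Matrix.smul_mul, hA, hP,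
      ← diagonal_smul, diagonal_add]
    rfl
  rw [eq_mul_mul_transpose_of_transpose_mul_mul_eq hQ hconj]
  simpa using hdiag.mul_mul_conjTranspose_same Q

end Matrix

theorem stmt_13_general {m : ℕ} (C₀ : Set (Fin m → ℝ)) (hconv : Convex ℝ C₀)
    (F : (Fin m → ℝ) → (Fin m → ℝ)) (hF : ContDiff ℝ 1 F)
    (J : (Fin m → ℝ) → Matrix (Fin m) (Fin m) ℝ)
    (hJ : ∀ x ∈ C₀, ∀ u : Fin m → ℝ, (J x).mulVec u = fderiv ℝ F x u)
    (hsym : ∀ x ∈ C₀, (J x).IsHermitian)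
    (P : Matrix (Fin m) (Fin m) ℝ) (hP2 : P * P = P)
    (hdiag : ∀ x ∈ C₀, ∃ Q : Matrix (Fin m) (Fin m) ℝ, Qᵀ * Q = 1 ∧
      ∃ a q : Fin m → ℝ, Qᵀ * J x * Q = Matrix.diagonal a ∧
        Qᵀ * P * Q = Matrix.diagonal q ∧ ∀ i, a i < 0 → 0 < q i)
    (s : ℝ)
    (hs : ∀ (x : Fin m → ℝ) (hx : x ∈ C₀), ∀ i : Fin m,
      -(hsym x hx).eigenvalues i ≤ s) :
    (∀ x ∈ C₀, ∀ y ∈ C₀,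
      0 ≤ ∑ i, ((F x i + s * P.mulVec x i) - (F y i + s * P.mulVec y i)) * (x i - y i)) ∧
    (∀ x ∈ C₀, (J x + s • P).PosSemidef) := by
  have hpsd : ∀ x ∈ C₀, (J x + s • P).PosSemidef := by
    intro x hx
    obtain ⟨Q, hQ, a, q, hJa, hPq, hneg⟩ := hdiag x hx
    refine posSemidef_add_smul_of_transpose_mul_mul_eq_diagonal hQ hJa hPq hP2 hneg fun i => ?_
    obtain ⟨j, hj⟩ := (hsym x hx).mem_range_eigenvalues_of_transpose_mul_mul_eq_diagonal hQ hJa i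
    exact hj ▸ hs x hx j
  refine ⟨fun x hx y hy => ?_, hpsd⟩
  let L : (Fin m → ℝ) →L[ℝ] (Fin m → ℝ) := (Matrix.toLin' P).toContinuousLinearMap
  have hderiv : ∀ z, HasFDerivAt (fun z => F z + s • L z) (fderiv ℝ F z + s • L) z := fun z =>
    ((hF.differentiable one_ne_zero) z).hasFDerivAt.add (L.hasFDerivAt.const_smul s)
  refine hconv.dotProduct_sub_nonneg_of_hasFDerivAt (fun z _ => hderiv z) (fun z hz u => ?_) hx hy
  have hJu : (fderiv ℝ F z + s • L) u = (J z + s • P) *ᵥ u := by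
    simp [L, ← hJ z hz, Matrix.add_mulVec, Matrix.smul_mulVec]
  rw [hJu, dotProduct_comm]
  simpa using (hpsd z hz).dotProduct_mulVec_nonneg u

theorem stmt_13 {m : ℕ} (C₀ : Set (Fin m → ℝ)) (hopen : IsOpen C₀) (hconv : Convex ℝ C₀)
    (F : (Fin m → ℝ) → (Fin m → ℝ)) (hF : ContDiff ℝ 1 F)
    (hpseudo : ∀ x ∈ C₀, ∀ y ∈ C₀,
      0 ≤ ∑ i, F x i * (y i - x i) → 0 ≤ ∑ i, F y i * (y i - x i))
    (J : (Fin m → ℝ) → Matrix (Fin m) (Fin m) ℝ)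
    (hJ : ∀ x ∈ C₀, ∀ u : Fin m → ℝ, (J x).mulVec u = fderiv ℝ F x u)
    (hsym : ∀ x ∈ C₀, (J x).IsHermitian)
    (P : Matrix (Fin m) (Fin m) ℝ) (hP1 : Pᵀ = P) (hP2 : P * P = P)
    (hdiag : ∀ x ∈ C₀, ∃ Q : Matrix (Fin m) (Fin m) ℝ, Qᵀ * Q = 1 ∧
      ∃ a q : Fin m → ℝ, Qᵀ * J x * Q = Matrix.diagonal a ∧
        Qᵀ * P * Q = Matrix.diagonal q ∧ ∀ i, a i < 0 → 0 < q i)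
    (s : ℝ) (hs0 : 0 ≤ s)
    (hs : ∀ (x : Fin m → ℝ) (hx : x ∈ C₀), ∀ i : Fin m,
      -(hsym x hx).eigenvalues i ≤ s) :
    (∀ x ∈ C₀, ∀ y ∈ C₀,
      0 ≤ ∑ i, ((F x i + s * P.mulVec x i) - (F y i + s * P.mulVec y i)) * (x i - y i)) ∧
    (∀ x ∈ C₀, (J x + s • P).PosSemidef) :=
  stmt_13_general C₀ hconv F hF J hJ hsym P hP2 hdiag s hs
end

section
/- Let C₀ ⊆ ℝᵐ be an open convex set and F : ℝᵐ → ℝᵐ continuously differentiable and pseudomonotone on C₀ with symmetric Jacobian DF(x) for every x ∈ C₀. Let P ∈ ℝ^{m×m} be an orthogonal projection matrix (Pᵀ = P, P² = P). Suppose e₃ > 0 is such that for every x ∈ C₀ and every index i: (i) (DF(x))_{ii} + e₃·P_{ii} > 0; and (ii) DF(x) + e₃·P is strictly diagonally dominant, i.e. (DF(x))_{ii} + e₃·P_{ii} > ∑_{j≠i} |(DF(x))_{ij} + e₃·P_{ij}|. Then for every s ≥ e₃ the map x ↦ F(x) + s · P x is monotone on C₀: ⟪(F(x) + s·Px) − (F(y)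 + s·Py), x − y⟫ ≥ 0 for all x, y ∈ C₀. -/
open Matrix

/-!
By Gershgorin's theorem a symmetric, weakly diagonally dominant real matrix has nonnegative
eigenvalues, so on `C₀` the matrix `DF + e₃ P` is positive semidefinite; so is the projection
`P = Pᵀ P`, hence so is `DF + s P = (DF + e₃ P) + (s - e₃) P`, the Jacobian of `F + s P`.
The mean value theorem along the segment `[y, x] ⊆ C₀` turns this into monotonicity.
-/

theorem Matrix.IsHermitian.posSemidef_of_sum_abs_le_diag {n : Type*} [Fintype n] [DecidableEq n]
    {A : Matrix n n ℝ} (hA : A.IsHermitian)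
    (hdd : ∀ i, ∑ j ∈ Finset.univ.erase i, |A i j| ≤ A i i) : A.PosSemidef := by
  refine hA.posSemidef_iff_eigenvalues_nonneg.2 fun i => ?_
  change 0 ≤ hA.eigenvalues i
  have hμ : Module.End.HasEigenvalue (toLin' A) (hA.eigenvalues i) := by
    rw [Module.End.hasEigenvalue_iff_mem_spectrum, spectrum_toLin']
    exact hA.eigenvalues_mem_spectrum_real i
  obtain ⟨k, hk⟩ := eigenvalue_mem_ball hμ
  simp only [Metric.mem_closedBall, Real.dist_eq, Real.norm_eq_abs] at hk
  linarith [hdd k, neg_abs_le (hA.eigenvalues i - A k k)]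

theorem Matrix.IsHermitian.posSemidef_of_mul_self_eq {n R : Type*} [Fintype n] [CommRing R]
    [PartialOrder R] [StarRing R] [StarOrderedRing R] {P : Matrix n n R} (hP : P.IsHermitian)
    (hPP : P * P = P) : P.PosSemidef := by
  simpa [hP.eq, hPP] using posSemidef_conjTranspose_mul_self P

theorem Convex.dotProduct_sub_nonneg_of_fderiv {ι : Type*} [Fintype ι]
    {G : (ι → ℝ) → ι → ℝ} {C : Set (ι → ℝ)} (hC : Convex ℝ C) (hG : Differentiable ℝ G)
    (hG' : ∀ z ∈ C, ∀ v, 0 ≤ fderiv ℝ G z v ⬝ᵥ v) {x y : ι → ℝ} (hx : x ∈ C) (hy : y ∈ C) :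
    0 ≤ (G x - G y) ⬝ᵥ (x - y) := by
  set w := x - y
  let ℓ : (ι → ℝ) →L[ℝ] ℝ := LinearMap.toContinuousLinearMap (dotProductBilin ℝ ℝ w)
  obtain ⟨z, hz, hmvt⟩ := domain_mvt (f := fun z => ℓ (G z))
    (f' := fun z => ℓ.comp (fderiv ℝ G z))
    (fun z _ => (ℓ.hasFDerivAt.comp z (hG z).hasFDerivAt).hasFDerivWithinAt) hC hy hx
  have hzC : z ∈ C := hC.segment_subset hy hx hz
  have hℓ : (G x - G y) ⬝ᵥ w = ℓ (G x) - ℓ (G y) := by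
    simp [ℓ, dotProduct_comm w, sub_dotProduct]
  rw [hℓ, hmvt]
  change 0 ≤ w ⬝ᵥ fderiv ℝ G z w
  rw [dotProduct_comm]
  exact hG' z hzC w

theorem Matrix.IsHermitian.posSemidef_add_smul {n : Type*} [Fintype n] [DecidableEq n]
    {A P : Matrix n n ℝ} (hA : A.IsHermitian) (hP : P.PosSemidef) {e s : ℝ} (hes : e ≤ s)
    (hdd : ∀ i, ∑ j ∈ Finset.univ.erase i, |A i j + e * P i j| ≤ A i i + e * P i i) :
    (A + s • P).PosSemidef := by
  have hAe : (A + e • P).PosSemidef :=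
    (hA.add (hP.isHermitian.smul (IsSelfAdjoint.all e))).posSemidef_of_sum_abs_le_diag
      (by simpa using hdd)
  simpa [add_assoc, ← add_smul] using hAe.add (hP.smul (sub_nonneg.2 hes))

theorem stmt_16_general {m : ℕ} (C₀ : Set (Fin m → ℝ)) (hconv : Convex ℝ C₀)
    (F : (Fin m → ℝ) → (Fin m → ℝ)) (hF : ContDiff ℝ 1 F)
    (J : (Fin m → ℝ) → Matrix (Fin m) (Fin m) ℝ)
    (hJ : ∀ x ∈ C₀, ∀ u : Fin m → ℝ, (J x).mulVec u = fderiv ℝ F x u)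
    (hsym : ∀ x ∈ C₀, (J x).IsHermitian)
    (P : Matrix (Fin m) (Fin m) ℝ) (hP1 : Pᵀ = P) (hP2 : P * P = P)
    (e₃ : ℝ)
    (hdd : ∀ x ∈ C₀, ∀ i : Fin m,
      ∑ j ∈ Finset.univ.erase i, |J x i j + e₃ * P i j| < J x i i + e₃ * P i i) :
    ∀ s : ℝ, e₃ ≤ s → ∀ x ∈ C₀, ∀ y ∈ C₀,
      0 ≤ ∑ i, ((F x i + s * P.mulVec x i) - (F y i + s * P.mulVec y i)) * (x i - y i) := by
  intro s hs x hx y hy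
  have hP : P.PosSemidef :=
    IsHermitian.posSemidef_of_mul_self_eq (by simpa [IsHermitian] using hP1) hP2
  let L : (Fin m → ℝ) →L[ℝ] (Fin m → ℝ) := LinearMap.toContinuousLinearMap (toLin' P)
  have hG : ∀ z, HasFDerivAt (fun z => F z + s • P *ᵥ z) (fderiv ℝ F z + s • L) z := fun z =>
    (hF.differentiable one_ne_zero z).hasFDerivAt.add (L.hasFDerivAt.const_smul s)
  refine hconv.dotProduct_sub_nonneg_of_fderiv (fun z => (hG z).differentiableAt)
    (fun z hz v => ?_) hx hy
  have hJP := (hsym z hz).posSemidef_add_smul hP hs fun i => (hdd z hz i).le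
  rw [(hG z).fderiv, dotProduct_comm]
  simpa [L, ← hJ z hz, add_mulVec, smul_mulVec] using hJP.dotProduct_mulVec_nonneg v

theorem stmt_16 {m : ℕ} (C₀ : Set (Fin m → ℝ)) (hopen : IsOpen C₀) (hconv : Convex ℝ C₀)
    (F : (Fin m → ℝ) → (Fin m → ℝ)) (hF : ContDiff ℝ 1 F)
    (hpseudo : ∀ x ∈ C₀, ∀ y ∈ C₀,
      0 ≤ ∑ i, F x i * (y i - x i) → 0 ≤ ∑ i, F y i * (y i - x i))
    (J : (Fin m → ℝ) → Matrix (Fin m) (Fin m) ℝ)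
    (hJ : ∀ x ∈ C₀, ∀ u : Fin m → ℝ, (J x).mulVec u = fderiv ℝ F x u)
    (hsym : ∀ x ∈ C₀, (J x).IsHermitian)
    (P : Matrix (Fin m) (Fin m) ℝ) (hP1 : Pᵀ = P) (hP2 : P * P = P)
    (e₃ : ℝ) (he₃ : 0 < e₃)
    (hdiagpos : ∀ x ∈ C₀, ∀ i : Fin m, 0 < J x i i + e₃ * P i i)
    (hdd : ∀ x ∈ C₀, ∀ i : Fin m,
      ∑ j ∈ Finset.univ.erase i, |J x i j + e₃ * P i j| < J x i i + e₃ * P i i) :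
    ∀ s : ℝ, e₃ ≤ s → ∀ x ∈ C₀, ∀ y ∈ C₀,
      0 ≤ ∑ i, ((F x i + s * P.mulVec x i) - (F y i + s * P.mulVec y i)) * (x i - y i) :=
  stmt_16_general C₀ hconv F hF J hJ hsym P hP1 hP2 e₃ hdd
end
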